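/- For every m > 1 there is a constant C_m > 0, given by C_m = 2^{m-1} - 1 for m ∈ (1,2] ∪ [3,∞) and C_m = m for m ∈ (2,3), such that (x+y)^m ≤ x^m + y^m + C_m(x y^{m-1} + x^{m-1} y) for all x, y > 0. -/

import Mathlib

/-!
Dividing by `x ^ m` and putting `t = y / x`, the claim is that
`slack m C t = 1 + t ^ m + C (t + t ^ (m - 1)) - (1 + t) ^ m` is nonnegative, and by symmetry
it suffices to take `t ≤ 1`. The second derivative of `slack m C` is `(m - 1) t ^ (m - 3)` times
`C (m - 2) - m s(1 + 1 / t)`, where `s` is the secant slope of `u ↦ u ^ (m - 2)` from `1`.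

For `m ∈ (2, 3)` and `C = m`, Bernoulli's inequality bounds `s` by `m - 2`, so `slack` is convex,
and as `slack` and its derivative vanish at `0`, it is nonnegative.

Otherwise `u ↦ u ^ (m - 2)` is convex, so `slack''` changes sign at most once on `(0, ∞)`, from
`-` to `+`. With `C = 2 ^ (m - 1) - 1` we have `slack 0 = slack 1 = slack' 1 = 0`. At an interior
minimum `c` of `slack` on `[0, 1]`, either `slack'' ≥ 0` on `[c, 1]`, so `slack' ≤ slack' 1 = 0`
there and `slack c ≥ slack 1`, or `slack'' ≤ 0` on `(0, c]`, so `slack' ≥ slack' c = 0` there and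
`slack c ≥ slack 0`.
-/

open Real Set

/-- The constant `C_m`: `2^(m-1) - 1` for `m ∈ (1,2] ∪ [3,∞)` and `m` for `m ∈ (2,3)`. -/
noncomputable def Cm (m : ℝ) : ℝ := if m ≤ 2 ∨ 3 ≤ m then 2 ^ (m - 1) - 1 else m

theorem convexOn_rpow_of_nonpos {q : ℝ} (hq : q ≤ 0) :
    ConvexOn ℝ (Ioi 0) fun x : ℝ ↦ x ^ q := by
  refine MonotoneOn.convexOn_of_deriv (convex_Ioi 0)
    (fun x hx ↦ (continuousAt_rpow_const x q (Or.inl (ne_of_gt hx))).continuousWithinAt)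
    (fun x hx ↦ ?_) ?_
  · rw [interior_Ioi] at hx
    exact (hasDerivAt_rpow_const (Or.inl (ne_of_gt hx))).differentiableAt.differentiableWithinAt
  · rw [interior_Ioi, deriv_rpow_const']
    intro x hx y _ hxy
    exact mul_le_mul_of_nonpos_left (rpow_le_rpow_of_nonpos hx hxy (by linarith)) hq

theorem convexOn_rpow_Ioi {q : ℝ} (hq : q ≤ 0 ∨ 1 ≤ q) :
    ConvexOn ℝ (Ioi 0) fun x : ℝ ↦ x ^ q := by
  rcases hq with hq | hq
  · exact convexOn_rpow_of_nonpos hq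
  · exact (convexOn_rpow hq).subset Ioi_subset_Ici_self (convex_Ioi 0)

theorem slope_rpow_one_le {q x : ℝ} (hq₀ : 0 ≤ q) (hq₁ : q ≤ 1) (hx : 1 < x) :
    slope (fun u : ℝ ↦ u ^ q) 1 x ≤ q := by
  have := rpow_one_add_le_one_add_mul_self (s := x - 1) (by linarith) hq₀ hq₁
  rw [slope_def_field, one_rpow, div_le_iff₀ (by linarith)]
  simp only [add_sub_cancel] at this
  linarith

noncomputable def slack (m C t : ℝ) : ℝ := 1 + t ^ m + C * (t + t ^ (m - 1)) - (1 + t) ^ m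

noncomputable def slackDeriv (m C t : ℝ) : ℝ :=
  m * t ^ (m - 1) + C * (1 + (m - 1) * t ^ (m - 2)) - m * (1 + t) ^ (m - 1)

noncomputable def slackCurv (m C t : ℝ) : ℝ :=
  C * (m - 2) - m * slope (fun x : ℝ ↦ x ^ (m - 2)) 1 (1 + t⁻¹)

theorem hasDerivAt_slack (m C : ℝ) {t : ℝ} (ht : 0 < t) :
    HasDerivAt (slack m C) (slackDeriv m C t) t := by
  have h₁ := hasDerivAt_rpow_const (p := m) (Or.inl ht.ne')
  have h₂ := hasDerivAt_rpow_const (p := m - 1) (Or.inl ht.ne')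
  have h₃ := ((hasDerivAt_id t).const_add 1).rpow_const (p := m) (Or.inl (by simp; positivity))
  refine ((((hasDerivAt_const t 1).add h₁).add (((hasDerivAt_id t).add h₂).const_mul C)).sub
    h₃).congr_deriv ?_
  simp only [slackDeriv, id, show m - 1 - 1 = m - 2 by ring]
  ring

theorem hasDerivAt_slackDeriv (m C : ℝ) {t : ℝ} (ht : 0 < t) :
    HasDerivAt (slackDeriv m C) ((m - 1) * t ^ (m - 3) * slackCurv m C t) t := by
  have h₁ := hasDerivAt_rpow_const (p := m - 1) (Or.inl ht.ne')
  have h₂ := hasDerivAt_rpow_const (p := m - 2) (Or.inl ht.ne')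
  have h₃ := ((hasDerivAt_id t).const_add 1).rpow_const (p := m - 1)
    (Or.inl (by simp; positivity))
  refine (((h₁.const_mul m).add
    (((hasDerivAt_const t 1).add (h₂.const_mul (m - 1))).const_mul C)).sub
    (h₃.const_mul m)).congr_deriv ?_
  have hsplit : (1 + t⁻¹) ^ (m - 2) = (1 + t) ^ (m - 2) / t ^ (m - 2) := by
    rw [← div_rpow (by positivity) ht.le]; congr 1; field_simp; ring
  have hpow : t ^ (m - 2) = t ^ (m - 3) * t := by
    rw [← rpow_add_one ht.ne']; ring_nf
  simp only [slackCurv, slope_def_field, hsplit, one_rpow, id, hpow,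
    show m - 1 - 1 = m - 2 by ring, show m - 2 - 1 = m - 3 by ring]
  field_simp
  ring

theorem continuous_slack {m : ℝ} (C : ℝ) (hm : 1 < m) : Continuous (slack m C) := by
  have h₁ := continuous_rpow_const (q := m) (by linarith)
  have h₂ := continuous_rpow_const (q := m - 1) (by linarith)
  unfold slack
  fun_prop

theorem slack_zero {m : ℝ} (C : ℝ) (hm : 1 < m) : slack m C 0 = 0 := by
  simp [slack, zero_rpow (by linarith : m ≠ 0), zero_rpow (by linarith : m - 1 ≠ 0)]

theorem slack_one (m : ℝ) : slack m (2 ^ (m - 1) - 1) 1 = 0 := by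
  rw [slack, one_rpow, one_rpow, one_add_one_eq_two, rpow_sub_one two_ne_zero]
  ring

theorem slackDeriv_one (m : ℝ) : slackDeriv m (2 ^ (m - 1) - 1) 1 = 0 := by
  rw [slackDeriv, one_rpow, one_rpow, one_add_one_eq_two]
  ring

theorem slackCurv_monotoneOn {m : ℝ} (C : ℝ) (hm : 0 ≤ m) (hm' : m ≤ 2 ∨ 3 ≤ m) :
    MonotoneOn (slackCurv m C) (Ioi 0) := by
  intro s hs t ht hst
  have hconv : ConvexOn ℝ (Ioi 0) fun x : ℝ ↦ x ^ (m - 2) :=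
    convexOn_rpow_Ioi (hm'.imp (fun h ↦ by linarith) fun h ↦ by linarith)
  have hmem : ∀ {u : ℝ}, 0 < u → 1 + u⁻¹ ∈ Ioi (0 : ℝ) \ {1} := fun hu ↦
    ⟨by simp only [mem_Ioi]; positivity, by simp [hu.ne']⟩
  have := hconv.slope_mono (mem_Ioi.2 one_pos) (hmem ht) (hmem hs) (by gcongr)
  unfold slackCurv
  nlinarith

theorem slackCurv_nonneg {m : ℝ} (h₂ : 2 < m) (h₃ : m < 3) {t : ℝ} (ht : 0 < t) :
    0 ≤ slackCurv m m t := by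
  have := slope_rpow_one_le (q := m - 2) (x := 1 + t⁻¹) (by linarith) (by linarith)
    (by simp; positivity)
  unfold slackCurv
  nlinarith

theorem slack_nonneg_of_slackCurv_nonneg {m c : ℝ} (hm : 1 < m) (hm' : m ≤ 2 ∨ 3 ≤ m)
    (hc : 0 < c) (hc₁ : c ≤ 1) (hκ : 0 ≤ slackCurv m (2 ^ (m - 1) - 1) c) :
    0 ≤ slack m (2 ^ (m - 1) - 1) c := by
  set C : ℝ := 2 ^ (m - 1) - 1
  have hderiv_mono : MonotoneOn (slackDeriv m C) (Icc c 1) := by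
    refine monotoneOn_of_hasDerivWithinAt_nonneg
      (f' := fun x ↦ (m - 1) * x ^ (m - 3) * slackCurv m C x) (convex_Icc c 1)
      (fun x hx ↦ (hasDerivAt_slackDeriv m C (hc.trans_le hx.1)).continuousAt.continuousWithinAt)
      (fun x hx ↦ ?_) fun x hx ↦ ?_
    all_goals rw [interior_Icc] at hx
    · exact (hasDerivAt_slackDeriv m C (hc.trans hx.1)).hasDerivWithinAt
    · exact mul_nonneg (mul_nonneg (by linarith) (rpow_nonneg (hc.trans hx.1).le _))
        (hκ.trans (slackCurv_monotoneOn C (by linarith) hm' hc (hc.trans hx.1) hx.1.le))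
  have hslack_anti : AntitoneOn (slack m C) (Icc c 1) := by
    refine antitoneOn_of_hasDerivWithinAt_nonpos (f' := slackDeriv m C) (convex_Icc c 1)
      (continuous_slack C hm).continuousOn (fun x hx ↦ ?_) fun x hx ↦ ?_
    all_goals rw [interior_Icc] at hx
    · exact (hasDerivAt_slack m C (hc.trans hx.1)).hasDerivWithinAt
    · simpa [C, slackDeriv_one] using
        hderiv_mono ⟨hx.1.le, hx.2.le⟩ ⟨hc₁, le_rfl⟩ hx.2.le
  simpa [C, slack_one] using hslack_anti ⟨le_rfl, hc₁⟩ ⟨hc₁, le_rfl⟩ hc₁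

theorem slack_zero_le_of_slackCurv_nonpos {m c C : ℝ} (hm : 1 < m) (hm' : m ≤ 2 ∨ 3 ≤ m)
    (hc : 0 < c) (hκ : slackCurv m C c ≤ 0) (hd : 0 ≤ slackDeriv m C c) :
    slack m C 0 ≤ slack m C c := by
  have hderiv_anti : AntitoneOn (slackDeriv m C) (Ioc 0 c) := by
    refine antitoneOn_of_hasDerivWithinAt_nonpos
      (f' := fun x ↦ (m - 1) * x ^ (m - 3) * slackCurv m C x) (convex_Ioc 0 c)
      (fun x hx ↦ (hasDerivAt_slackDeriv m C hx.1).continuousAt.continuousWithinAt)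
      (fun x hx ↦ ?_) fun x hx ↦ ?_
    all_goals rw [interior_Ioc] at hx
    · exact (hasDerivAt_slackDeriv m C hx.1).hasDerivWithinAt
    · exact mul_nonpos_of_nonneg_of_nonpos (mul_nonneg (by linarith) (rpow_nonneg hx.1.le _))
        ((slackCurv_monotoneOn C (by linarith) hm' hx.1 hc hx.2.le).trans hκ)
  have hslack_mono : MonotoneOn (slack m C) (Icc 0 c) := by
    refine monotoneOn_of_hasDerivWithinAt_nonneg (f' := slackDeriv m C) (convex_Icc 0 c)
      (continuous_slack C hm).continuousOn (fun x hx ↦ ?_) fun x hx ↦ ?_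
    all_goals rw [interior_Icc] at hx
    · exact (hasDerivAt_slack m C hx.1).hasDerivWithinAt
    · exact hd.trans (hderiv_anti ⟨hx.1, hx.2.le⟩ ⟨hc, le_rfl⟩ hx.2.le)
  exact hslack_mono ⟨le_rfl, hc.le⟩ ⟨hc.le, le_rfl⟩ hc.le

theorem slack_nonneg_of_le_one {m t : ℝ} (hm : 1 < m) (hm' : m ≤ 2 ∨ 3 ≤ m)
    (ht : 0 ≤ t) (ht₁ : t ≤ 1) : 0 ≤ slack m (2 ^ (m - 1) - 1) t := by
  set C : ℝ := 2 ^ (m - 1) - 1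
  obtain ⟨c, hc, hmin⟩ := isCompact_Icc.exists_isMinOn (nonempty_Icc.2 zero_le_one)
    (continuous_slack C hm).continuousOn
  refine le_trans ?_ (hmin ⟨ht, ht₁⟩)
  by_contra! hneg
  have hc₀ : 0 < c := hc.1.lt_of_ne (by rintro rfl; simp [slack_zero C hm] at hneg)
  have hc₁ : c < 1 := hc.2.lt_of_ne (by rintro rfl; simp [C, slack_one] at hneg)
  rcases le_or_gt 0 (slackCurv m C c) with hκ | hκ
  · exact hneg.not_ge (slack_nonneg_of_slackCurv_nonneg hm hm' hc₀ hc₁.le hκ)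
  · have hd := (hmin.isLocalMin (Icc_mem_nhds hc₀ hc₁)).hasDerivAt_eq_zero
      (hasDerivAt_slack m C hc₀)
    have := slack_zero_le_of_slackCurv_nonpos hm hm' hc₀ hκ.le hd.ge
    rw [slack_zero C hm] at this
    exact hneg.not_ge this

theorem slack_nonneg_of_two_lt_of_lt_three {m t : ℝ} (h₂ : 2 < m) (h₃ : m < 3)
    (ht : 0 ≤ t) : 0 ≤ slack m m t := by
  have hcont : Continuous (slackDeriv m m) := by
    have h₁ := continuous_rpow_const (q := m - 1) (by linarith)
    have h₂ := continuous_rpow_const (q := m - 2) (by linarith)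
    unfold slackDeriv
    fun_prop
  have hderiv_zero : slackDeriv m m 0 = 0 := by
    simp [slackDeriv, zero_rpow (by linarith : m - 1 ≠ 0), zero_rpow (by linarith : m - 2 ≠ 0)]
  have hderiv_mono : MonotoneOn (slackDeriv m m) (Ici 0) := by
    refine monotoneOn_of_hasDerivWithinAt_nonneg
      (f' := fun x ↦ (m - 1) * x ^ (m - 3) * slackCurv m m x) (convex_Ici 0) hcont.continuousOn
      (fun x hx ↦ ?_) fun x hx ↦ ?_
    all_goals rw [interior_Ici] at hx
    · exact (hasDerivAt_slackDeriv m m hx).hasDerivWithinAt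
    · exact mul_nonneg (mul_nonneg (by linarith) (rpow_nonneg hx.le _))
        (slackCurv_nonneg h₂ h₃ hx)
  have hslack_mono : MonotoneOn (slack m m) (Ici 0) := by
    refine monotoneOn_of_hasDerivWithinAt_nonneg (f' := slackDeriv m m) (convex_Ici 0)
      (continuous_slack m (by linarith)).continuousOn (fun x hx ↦ ?_) fun x hx ↦ ?_
    all_goals rw [interior_Ici] at hx
    · exact (hasDerivAt_slack m m hx).hasDerivWithinAt
    · exact hderiv_zero ▸ hderiv_mono self_mem_Ici (mem_Ici.2 (le_of_lt hx)) (le_of_lt hx)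
  simpa [slack_zero m (by linarith : 1 < m)] using hslack_mono self_mem_Ici ht ht

theorem add_rpow_le_of_slack_nonneg {m C x y : ℝ} (hx : 0 < x) (hy : 0 < y)
    (h : 0 ≤ slack m C (y / x)) :
    (x + y) ^ m ≤ x ^ m + y ^ m + C * (x * y ^ (m - 1) + x ^ (m - 1) * y) := by
  have hscale : x ^ m * slack m C (y / x) =
      x ^ m + y ^ m + C * (x * y ^ (m - 1) + x ^ (m - 1) * y) - (x + y) ^ m := by
    have hsum : 1 + y / x = (x + y) / x := by field_simp
    rw [slack, hsum, div_rpow hy.le hx.le, div_rpow hy.le hx.le,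
      div_rpow (by positivity) hx.le, rpow_sub_one hx.ne', rpow_sub_one hy.ne']
    have hxm := rpow_pos_of_pos hx m
    field_simp
    ring
  have := mul_nonneg (rpow_pos_of_pos hx m).le h
  linarith

theorem Cm_pos {m : ℝ} (hm : 1 < m) : 0 < Cm m := by
  unfold Cm
  split_ifs
  · linarith [one_lt_rpow one_lt_two (sub_pos.2 hm)]
  · linarith

theorem slack_Cm_nonneg {m t : ℝ} (hm : 1 < m) (ht : 0 ≤ t) (ht₁ : t ≤ 1) :
    0 ≤ slack m (Cm m) t := by
  unfold Cm
  split_ifs with h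
  · exact slack_nonneg_of_le_one hm h ht ht₁
  · simp only [not_or, not_le] at h
    exact slack_nonneg_of_two_lt_of_lt_three h.1 h.2 ht

theorem sum_rpow_le (m : ℝ) (hm : 1 < m) (x y : ℝ) (hx : 0 < x) (hy : 0 < y) :
    0 < Cm m ∧ (x + y) ^ m ≤ x ^ m + y ^ m + Cm m * (x * y ^ (m - 1) + x ^ (m - 1) * y) := by
  refine ⟨Cm_pos hm, ?_⟩
  wlog hyx : y ≤ x generalizing x y
  · have := this y x hy hx (le_of_not_ge hyx)
    rw [add_comm y x] at this
    linarith
  exact add_rpow_le_of_slack_nonneg hx hy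
    (slack_Cm_nonneg hm (div_pos hy hx).le ((div_le_one hx).2 hyx))
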